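/- Let f be a non-constant meromorphic function on the unit disk 𝔻, let k ∈ ℕ, and suppose f' has a zero at a point z_0 ∈ 𝔻. Then S_k(f) has a pole of order exactly k at z_0. -/

import Mathlib

open Complex Filter Set Metric Topology

noncomputable section

/-- The open unit disk `𝔻`. -/
def unitDisk : Set ℂ := Metric.ball (0 : ℂ) 1

/-- The logarithmic derivative of `f'`, i.e. `f''/f'`. -/
def ldd (f : ℂ → ℂ) : ℂ → ℂ := fun z => deriv (deriv f) z / deriv f z

/-- `SRec n f m` is the generalized Schwarzian `S_{m+2,n}(f)`. -/
def SRec (n : ℕ) (f : ℂ → ℂ) : ℕ → ℂ → ℂ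
  | 0 => ldd f
  | m + 1 => fun z => deriv (SRec n f m) z - (1 / (n : ℂ)) * ldd f z * SRec n f m z

/-- `SGen n k f` is `S_{k,n}(f)` (for `k ≥ 2`). -/
def SGen (n k : ℕ) (f : ℂ → ℂ) : ℂ → ℂ := SRec n f (k - 2)

/-- The generalized Schwarzian derivative of order `k`: `S_k(f) = S_{k+1,k}(f)`. -/
def Sk (k : ℕ) (f : ℂ → ℂ) : ℂ → ℂ := SGen k (k + 1) f

/-- `f` is a non-constant meromorphic function on `U`: near no point of `U`
is `f` eventually equal to a constant. -/
def NonConstOn (f : ℂ → ℂ) (U : Set ℂ) : Prop :=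
  ¬ ∃ c : ℂ, ∃ z ∈ U, ∀ᶠ w in 𝓝[≠] z, f w = c

/-- `E` has no accumulation point in `U`. -/
def NoAccIn (E U : Set ℂ) : Prop := ∀ z ∈ U, ¬ AccPt z (𝓟 E)

/-- The family `M_{k,M}`: (non-constant) meromorphic functions on `𝔻` whose generalized
Schwarzian derivative `S_k(f)` is holomorphic on `𝔻` with `‖S_k(f)‖_∞ ≤ M`, i.e. it
coincides (away from a set without accumulation points in `𝔻`) with a function `g`
holomorphic on `𝔻` and bounded by `M`. -/
def MFam (k : ℕ) (M : ℝ) : Set (ℂ → ℂ) :=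
  {f | MeromorphicOn f unitDisk ∧ NonConstOn f unitDisk ∧
    ∃ g : ℂ → ℂ, AnalyticOnNhd ℂ g unitDisk ∧ (∀ z ∈ unitDisk, ‖g z‖ ≤ M) ∧
      NoAccIn {w ∈ unitDisk | Sk k f w ≠ g w} unitDisk}

/-- The family `H_{k,M} = M_{k,M} ∩ H(𝔻)`. -/
def HFam (k : ℕ) (M : ℝ) : Set (ℂ → ℂ) :=
  {f ∈ MFam k M | AnalyticOnNhd ℂ f unitDisk}

/-- The chordal (spherical) distance on the Riemann sphere `ℂ ∪ {∞}`. -/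
def sphDist (x y : OnePoint ℂ) : ℝ :=
  Option.elim x (Option.elim y 0 fun w => 1 / Real.sqrt (1 + ‖w‖ ^ 2))
    fun z =>
      Option.elim y (1 / Real.sqrt (1 + ‖z‖ ^ 2)) fun w =>
        ‖z - w‖ / (Real.sqrt (1 + ‖z‖ ^ 2) * Real.sqrt (1 + ‖w‖ ^ 2))

/-- Locally uniform convergence on `U` with respect to the spherical metric. -/
def TendstoLocUnifSph (F : ℕ → ℂ → ℂ) (g : ℂ → OnePoint ℂ) (U : Set ℂ) : Prop :=
  ∀ ε > (0 : ℝ), ∀ x ∈ U, ∃ t ∈ 𝓝[U] x,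
    ∀ᶠ n in atTop, ∀ y ∈ t, sphDist (F n y : OnePoint ℂ) (g y) < ε

/-- A family of (meromorphic) functions is normal on `U` if every sequence has a
subsequence converging locally uniformly on `U` w.r.t. the spherical metric. -/
def NormalOn (𝓕 : Set (ℂ → ℂ)) (U : Set ℂ) : Prop :=
  ∀ F : ℕ → ℂ → ℂ, (∀ n, F n ∈ 𝓕) →
    ∃ φ : ℕ → ℕ, StrictMono φ ∧
      ∃ g : ℂ → OnePoint ℂ, TendstoLocUnifSph (fun n => F (φ n)) g U

/-- A family is quasi-normal on `U` if every sequence has a subsequence converging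
locally uniformly (spherically) off some exceptional set `E ⊆ U` without
accumulation points in `U`. -/
def QuasiNormalOn (𝓕 : Set (ℂ → ℂ)) (U : Set ℂ) : Prop :=
  ∀ F : ℕ → ℂ → ℂ, (∀ n, F n ∈ 𝓕) →
    ∃ φ : ℕ → ℕ, StrictMono φ ∧ ∃ E : Set ℂ, E ⊆ U ∧ NoAccIn E U ∧
      ∃ g : ℂ → OnePoint ℂ, TendstoLocUnifSph (fun n => F (φ n)) g (U \ E)

/-- A family is locally uniformly bounded on `U`. -/
def LocUnifBddOn (𝓕 : Set (ℂ → ℂ)) (U : Set ℂ) : Prop :=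
  ∀ x ∈ U, ∃ t ∈ 𝓝[U] x, ∃ C : ℝ, ∀ f ∈ 𝓕, ∀ y ∈ t, ‖f y‖ ≤ C

/-- helper: analyticity of deriv at a point -/
lemma analyticAt_deriv {f : ℂ → ℂ} {x : ℂ} (h : AnalyticAt ℂ f x) :
    AnalyticAt ℂ (deriv f) x := by
  obtain ⟨s, hs, hana⟩ := h.eventually_analyticAt.exists_mem
  exact (AnalyticOnNhd.deriv (fun z hz => hana z hz)) x (mem_of_mem_nhds hs)

/-- helper: deriv congruence on punctured neighbourhoods -/
lemma deriv_eventuallyEq_punctured {u v : ℂ → ℂ} {z₀ : ℂ}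
    (h : u =ᶠ[𝓝[≠] z₀] v) : deriv u =ᶠ[𝓝[≠] z₀] deriv v := by
  rw [EventuallyEq, eventually_nhdsWithin_iff] at h ⊢
  obtain ⟨t, ht, hto, htz⟩ := _root_.eventually_nhds_iff.mp h
  refine _root_.eventually_nhds_iff.mpr ⟨t, ?_, hto, htz⟩
  intro w hw hwz
  have hopen : IsOpen (t \ {z₀}) := hto.sdiff isClosed_singleton
  have huv : u =ᶠ[𝓝 w] v := by
    filter_upwards [hopen.mem_nhds ⟨hw, hwz⟩] with y hy
    exact ht y hy.1 hy.2
  exact huv.deriv_eq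

/-- helper: analytic function with eventually vanishing derivative is eventually constant -/
lemma eventually_const_of_deriv_zero {f : ℂ → ℂ} {z₀ : ℂ}
    (ha : AnalyticAt ℂ f z₀) (hT : ∀ᶠ z in 𝓝 z₀, deriv f z = 0) :
    ∀ᶠ z in 𝓝 z₀, f z = f z₀ := by
  obtain ⟨r, hr, hball⟩ := Metric.eventually_nhds_iff_ball.mp (ha.eventually_analyticAt.and hT)
  have hd : DifferentiableOn ℂ f (ball z₀ r) := fun z hz =>
    ((hball z hz).1.differentiableAt).differentiableWithinAt
  have key : ∀ y ∈ ball z₀ r, f y = f z₀ := by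
    intro y hy
    refine ((convex_ball z₀ r).is_const_of_fderivWithin_eq_zero hd (fun z hz => ?_)
      hy (mem_ball_self hr))
    rw [fderivWithin_of_isOpen isOpen_ball hz, ← toSpanSingleton_deriv, (hball z hz).2]
    exact ContinuousLinearMap.ext fun x => by simp
  filter_upwards [ball_mem_nhds z₀ hr] with y hy using key y hy

/-- The main induction. -/
lemma SRec_form (n : ℕ) (hn : 1 ≤ n) (f : ℂ → ℂ) (z₀ : ℂ) (q : ℕ)
    (g : ℂ → ℂ) (hg : AnalyticAt ℂ g z₀) (hg0 : g z₀ ≠ 0)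
    (hf' : ∀ᶠ z in 𝓝 z₀, deriv f z = (z - z₀) ^ (q + 1) * g z) :
    ∀ m : ℕ, ∃ A : ℂ → ℂ, AnalyticAt ℂ A z₀ ∧ A z₀ ≠ 0 ∧
      ∀ᶠ z in 𝓝[≠] z₀, SRec n f m z = A z / (z - z₀) ^ (m + 1) := by
  -- the function A₀ controlling ldd f
  set p : ℕ := q + 1 with hp
  set A₀ : ℂ → ℂ := fun z => ((p : ℂ) * g z + (z - z₀) * deriv g z) / g z with hA₀def
  have hA₀ : AnalyticAt ℂ A₀ z₀ :=
    ((analyticAt_const.mul hg).add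
      ((analyticAt_id.sub analyticAt_const).mul (analyticAt_deriv hg))).div hg hg0
  have hA₀val : A₀ z₀ = (p : ℂ) := by
    simp only [hA₀def, sub_self, zero_mul, add_zero]
    exact mul_div_cancel_right₀ _ hg0
  -- second derivative formula
  have hf'' : ∀ᶠ z in 𝓝 z₀, deriv (deriv f) z
      = (p : ℂ) * (z - z₀) ^ q * g z + (z - z₀) ^ p * deriv g z := by
    have h1 : deriv (deriv f) =ᶠ[𝓝 z₀] deriv (fun z => (z - z₀) ^ p * g z) :=
      Filter.EventuallyEq.deriv hf'
    filter_upwards [h1, hg.eventually_analyticAt] with w h1w hgw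
    rw [h1w]
    have hd1 : HasDerivAt (fun z : ℂ => (z - z₀) ^ p) ((p : ℂ) * (w - z₀) ^ q * 1) w :=
      (((hasDerivAt_id w).sub_const z₀)).pow p
    have := (hd1.mul hgw.differentiableAt.hasDerivAt).deriv
    rw [show (fun z => (z - z₀) ^ p * g z) = (fun z => (z - z₀) ^ p) * g from rfl, this]; ring
  -- eventual nonvanishing of g and of z - z₀
  have hgne : ∀ᶠ z in 𝓝 z₀, g z ≠ 0 :=
    hg.continuousAt.eventually_ne hg0
  -- ldd formula
  have hldd : ∀ᶠ z in 𝓝[≠] z₀, ldd f z = A₀ z / (z - z₀) := by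
    rw [eventually_nhdsWithin_iff]
    filter_upwards [hf', hf'', hgne] with z h1 h2 h3 hz
    have hzz : z - z₀ ≠ 0 := sub_ne_zero.mpr hz
    rw [ldd, h1, h2, hA₀def]
    field_simp
    ring
  intro m
  induction m with
  | zero =>
    refine ⟨A₀, hA₀, ?_, ?_⟩
    · rw [hA₀val]; exact Nat.cast_ne_zero.mpr (by omega)
    · filter_upwards [hldd] with z hz
      simpa [SRec] using hz
  | succ m ih =>
    obtain ⟨A, hA, hA0, heq⟩ := ih
    set c : ℂ := ((m : ℂ) + 1) + (1 / (n : ℂ)) * (p : ℂ) with hc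
    refine ⟨fun z => deriv A z * (z - z₀) - (((m : ℂ) + 1) + (1 / (n : ℂ)) * A₀ z) * A z,
      ?_, ?_, ?_⟩
    · exact ((analyticAt_deriv hA).mul (analyticAt_id.sub analyticAt_const)).sub
        ((analyticAt_const.add (analyticAt_const.mul hA₀)).mul hA)
    · have hcne : c ≠ 0 := by
        have hcr : c = (((m : ℝ) + 1 + (1 / (n : ℝ)) * p : ℝ) : ℂ) := by
          push_cast [hc]; ring
        rw [hcr, Complex.ofReal_ne_zero]
        have hn' : (0:ℝ) < n := by exact_mod_cast hn
        positivity
      have hval : deriv A z₀ * (z₀ - z₀) - (((m : ℂ) + 1) + (1 / (n : ℂ)) * A₀ z₀) * A z₀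
          = -(c * A z₀) := by
        rw [hA₀val, hc]; ring
      show deriv A z₀ * (z₀ - z₀) - (((m : ℂ) + 1) + (1 / (n : ℂ)) * A₀ z₀) * A z₀ ≠ 0
      rw [hval, neg_ne_zero]
      exact mul_ne_zero hcne hA0
    · have hder : deriv (SRec n f m) =ᶠ[𝓝[≠] z₀]
          deriv (fun z => A z / (z - z₀) ^ (m + 1)) :=
        deriv_eventuallyEq_punctured heq
      have hnne : (n : ℂ) ≠ 0 := Nat.cast_ne_zero.mpr (by omega)
      filter_upwards [hder, hldd, heq,
        (hA.eventually_analyticAt.filter_mono nhdsWithin_le_nhds),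
        eventually_mem_nhdsWithin] with w h1 h2 h3 h4 hw
      have hw' : w ≠ z₀ := hw
      have hzz : w - z₀ ≠ 0 := sub_ne_zero.mpr hw'
      have hpow : ((w - z₀) ^ (m + 1)) ≠ 0 := pow_ne_zero _ hzz
      have hpowd : HasDerivAt (fun z : ℂ => (z - z₀) ^ (m + 1))
          ((((m : ℂ) + 1)) * (w - z₀) ^ m * 1) w := by
        have := ((hasDerivAt_id w).sub_const z₀).pow (m + 1)
        simp at this
        rw [mul_one]; exact this
      have hdiv := (h4.differentiableAt.hasDerivAt).div hpowd hpow
      show deriv (SRec n f m) w - (1 / (n : ℂ)) * ldd f w * SRec n f m w = _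
      rw [h1, show (fun z => A z / (z - z₀) ^ (m + 1)) = A / (fun z => (z - z₀) ^ (m + 1)) from rfl, hdiv.deriv, h2, h3]
      field_simp
      ring

/-- If `f` is a non-constant meromorphic function on `𝔻` and `f'` vanishes at
`z₀ ∈ 𝔻`, then `S_k(f)` has a pole of order exactly `k` at `z₀`. -/
theorem Sk_pole_of_deriv_zero (k : ℕ) (hk : 1 ≤ k) (f : ℂ → ℂ)
    (hf : MeromorphicOn f unitDisk) (hnc : NonConstOn f unitDisk)
    (z₀ : ℂ) (hz₀ : z₀ ∈ unitDisk) (ha : AnalyticAt ℂ f z₀) (hd : deriv f z₀ = 0) :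
    ∃ h : MeromorphicAt (Sk k f) z₀, meromorphicOrderAt (Sk k f) z₀ = ((-(k : ℤ)) : WithTop ℤ) := by
  have hfd : AnalyticAt ℂ (deriv f) z₀ := analyticAt_deriv ha
  have hne : ¬ ∀ᶠ z in 𝓝 z₀, deriv f z = 0 := by
    intro hT
    exact hnc ⟨f z₀, z₀, hz₀,
      (eventually_const_of_deriv_zero ha hT).filter_mono nhdsWithin_le_nhds⟩
  obtain ⟨p, g, hg, hg0, hfe⟩ := hfd.exists_eventuallyEq_pow_smul_nonzero_iff.mpr hne
  have hp1 : p ≠ 0 := by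
    intro hp0
    have h0 := hfe.self_of_nhds
    rw [hd, hp0, pow_zero, one_smul] at h0
    exact hg0 h0.symm
  obtain ⟨q, rfl⟩ : ∃ q, p = q + 1 := ⟨p - 1, by omega⟩
  have hfe' : ∀ᶠ z in 𝓝 z₀, deriv f z = (z - z₀) ^ (q + 1) * g z := by
    filter_upwards [hfe] with z hz; simpa [smul_eq_mul] using hz
  obtain ⟨A, hA, hA0, heq⟩ := SRec_form k hk f z₀ q g hg hg0 hfe' (k - 1)
  have heqk : ∀ᶠ z in 𝓝[≠] z₀, Sk k f z = A z / (z - z₀) ^ k := by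
    have hSk : Sk k f = SRec k f (k - 1) := by
      have h12 : k + 1 - 2 = k - 1 := by omega
      simp only [Sk, SGen, h12]
    have hkk : (k - 1) + 1 = k := by omega
    rw [hSk]
    filter_upwards [heq] with z hz
    rw [hz, hkk]
  have hpm : MeromorphicAt (fun z => (z - z₀) ^ k) z₀ :=
    ((analyticAt_id.sub analyticAt_const).pow k).meromorphicAt
  have hV : MeromorphicAt (A / fun z => (z - z₀) ^ k) z₀ := hA.meromorphicAt.div hpm
  have h : MeromorphicAt (Sk k f) z₀ := hV.congr <| by
    filter_upwards [heqk] with z hz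
    rw [Pi.div_apply, hz]
  refine ⟨h, ?_⟩
  have hev : ∀ᶠ z in 𝓝[≠] z₀, Sk k f z = (z - z₀) ^ (-(k : ℤ)) • A z := by
    filter_upwards [heqk, eventually_mem_nhdsWithin] with z hz hz'
    rw [hz, smul_eq_mul, zpow_neg, zpow_natCast, inv_mul_eq_div]
  have hord := (meromorphicOrderAt_eq_int_iff h (n := -(k : ℤ))).mpr ⟨A, hA, hA0, hev⟩
  rw [hord]
  push_cast
  ring_nf
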